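/- arXiv:2007.03088 — 5 statements merged into one kernel-verified Lean document; each statement's English description precedes it below -/
import Mathlib

section
/- Let k be a natural number with k+1 = 2^a · b where b is odd. Then for any integer x, [x]_{2k+1} = [x^{2^{a+1}}]_{b-1} · ∏_{i=0}^{a} (x^{2^i} + 1). -/
/-!
Since `2k + 2 = 2^(a+1) b`, the sum `[x]_{2k+1}` splits into `b` blocks of length `2^(a+1)`,
giving `[x^(2^(a+1))]_{b-1} · [x]_{2^(a+1)-1}`. The last factor becomes `∏_{i ≤ a} (x^(2^i) + 1)`
by iterating the case `m = 2` of the same splitting, `[x]_{2^(s+1)-1} = (x^(2^s) + 1) [x]_{2^s-1}`.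
-/

open Finset

theorem geom_sum_range_mul {R : Type*} [Semiring R] (x : R) (n m : ℕ) :
    ∑ j ∈ range (n * m), x ^ j = (∑ i ∈ range m, (x ^ n) ^ i) * ∑ j ∈ range n, x ^ j := by
  induction m with
  | zero => simp
  | succ m ih =>
    rw [Nat.mul_succ, sum_range_add, sum_range_succ, add_mul, ih, ← pow_mul]
    congr 1
    simp only [pow_add, mul_sum]

theorem geom_sum_two_pow {R : Type*} [CommSemiring R] (x : R) (s : ℕ) :
    ∑ j ∈ range (2 ^ s), x ^ j = ∏ i ∈ range s, (x ^ 2 ^ i + 1) := by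
  induction s with
  | zero => simp
  | succ s ih =>
    rw [pow_succ, geom_sum_range_mul, prod_range_succ, ← ih, geom_sum_two, mul_comm]

theorem bracket_factorization_general (x : ℤ) (k a b : ℕ) (hk : k + 1 = 2 ^ a * b) :
    (∑ j ∈ Finset.range (2 * k + 2), x ^ j)
      = (∑ j ∈ Finset.range b, (x ^ (2 ^ (a + 1))) ^ j)
        * ∏ i ∈ Finset.range (a + 1), (x ^ (2 ^ i) + 1) := by
  have hlen : 2 * k + 2 = 2 ^ (a + 1) * b := by rw [pow_succ', mul_assoc, ← hk]; ring
  rw [hlen, geom_sum_range_mul, geom_sum_two_pow]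

theorem bracket_factorization (x : ℤ) (k a b : ℕ) (hb : Odd b) (hk : k + 1 = 2 ^ a * b) :
    (∑ j ∈ Finset.range (2 * k + 2), x ^ j)
      = (∑ j ∈ Finset.range b, (x ^ (2 ^ (a + 1))) ^ j)
        * ∏ i ∈ Finset.range (a + 1), (x ^ (2 ^ i) + 1) :=
  bracket_factorization_general x k a b hk
end

section
/- Let ρ be an odd prime and ℓ a positive integer. If ℓ is even then ν_2(σ(ρ^ℓ)) = 0, and if ℓ is odd then ν_2(σ(ρ^ℓ)) = ν_2(ℓ+1) + ν_2(ρ+1) - 1. -/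
/-!
Since `ρ` is prime, `σ(ρ^ℓ) = 1 + ρ + ⋯ + ρ^ℓ`, a sum of `ℓ + 1` odd terms, so it is odd when `ℓ`
is even. When `ℓ` is odd, multiplying by `ρ - 1` gives `ρ^(ℓ+1) - 1`, whose 2-adic valuation is
`ν₂(ρ + 1) + ν₂(ρ - 1) + ν₂(ℓ + 1) - 1` by the lifting-the-exponent lemma for `p = 2`.
-/

open Finset

lemma Nat.even_geom_sum_iff_of_odd {x : ℕ} (hx : Odd x) (n : ℕ) :
    Even (∑ i ∈ range n, x ^ i) ↔ Even n := by
  induction n with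
  | zero => simp
  | succ n ih =>
    simp [sum_range_succ, Nat.even_add, Nat.even_add_one, ih, Nat.not_even_iff_odd.mpr hx.pow]

lemma padicValNat_two_geom_sum_add_one {x n : ℕ} (hx : Odd x) (hn : n ≠ 0) (hn_even : Even n) :
    padicValNat 2 (∑ i ∈ range n, x ^ i) + 1 = padicValNat 2 n + padicValNat 2 (x + 1) := by
  obtain rfl | h1x := (show 1 ≤ x from hx.pos).eq_or_lt
  · simp
  have lte := padicValNat.pow_two_sub_one h1x hx.not_two_dvd_nat hn hn_even
  rw [← geom_sum_mul_of_one_le h1x.le,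
    padicValNat.mul (geom_sum_pos x.zero_le hn).ne' (by omega)] at lte
  omega

theorem val2_sigma_prime_pow_general (ρ ℓ : ℕ) (hρ : Nat.Prime ρ) (hρodd : Odd ρ) :
    (Even ℓ → padicValNat 2 (∑ d ∈ (ρ ^ ℓ).divisors, d) = 0) ∧
    (Odd ℓ → padicValNat 2 (∑ d ∈ (ρ ^ ℓ).divisors, d)
      = padicValNat 2 (ℓ + 1) + padicValNat 2 (ρ + 1) - 1) := by
  have hσ : ∑ d ∈ (ρ ^ ℓ).divisors, d = ∑ i ∈ range (ℓ + 1), ρ ^ i := by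
    rw [← ArithmeticFunction.sigma_one_apply, ArithmeticFunction.sigma_one_apply_prime_pow hρ]
  rw [hσ]
  refine ⟨fun hℓ_even => padicValNat.eq_zero_of_not_dvd ?_, fun hℓ_odd => ?_⟩
  · rw [← even_iff_two_dvd, Nat.even_geom_sum_iff_of_odd hρodd, Nat.even_add_one]
    exact not_not.mpr hℓ_even
  · have := padicValNat_two_geom_sum_add_one hρodd ℓ.add_one_ne_zero hℓ_odd.add_one
    omega

theorem val2_sigma_prime_pow (ρ ℓ : ℕ) (hρ : Nat.Prime ρ) (hρodd : Odd ρ) (hℓ : 0 < ℓ) :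
    (Even ℓ → padicValNat 2 (∑ d ∈ (ρ ^ ℓ).divisors, d) = 0) ∧
    (Odd ℓ → padicValNat 2 (∑ d ∈ (ρ ^ ℓ).divisors, d)
      = padicValNat 2 (ℓ + 1) + padicValNat 2 (ρ + 1) - 1) :=
  val2_sigma_prime_pow_general ρ ℓ hρ hρodd
end

section
/- Let n be a positive integer with prime factorization n = ∏_{j=1}^s p_j^{a_j}. Then ν_2(σ(n)) = ∑ ν_2((a_i+1)(p_i+1)/2), where the sum runs over those indices i with p_i odd and a_i odd. -/
/-!
By multiplicativity, `σ(n) = ∏ₚ (1 + p + ⋯ + p^a)` with `a = ν_p(n)`, so `ν_2(σ(n))` is the sum of the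
`ν_2` of these geometric sums. Such a sum is odd unless `p` is odd and the number of terms `a + 1` is
even. In that case `(p - 1)(1 + p + ⋯ + p^a) = p^(a+1) - 1`, and lifting the exponent gives
`ν_2(p^(a+1) - 1) = ν_2(p - 1) + ν_2(p + 1) + ν_2(a + 1) - 1`.
-/

open Finset

theorem padicValNat_finset_prod {ι : Type*} {p : ℕ} [hp : Fact p.Prime] {s : Finset ι} {f : ι → ℕ}
    (hf : ∀ i ∈ s, f i ≠ 0) :
    padicValNat p (∏ i ∈ s, f i) = ∑ i ∈ s, padicValNat p (f i) := by
  simp only [← Nat.factorization_def _ hp.out, Nat.factorization_prod hf, Finsupp.finsetSum_apply]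

namespace Nat

variable {p m : ℕ}

theorem odd_geom_sum_iff_of_odd (hp : Odd p) : Odd (∑ i ∈ range m, p ^ i) ↔ Odd m := by
  induction m with
  | zero => simp
  | succ m ih => simp [geom_sum_succ', Nat.odd_add, hp.pow, ← not_odd_iff_even, ih, odd_add_one]

theorem odd_geom_sum_of_even (hp : Even p) (hm : m ≠ 0) : Odd (∑ i ∈ range m, p ^ i) := by
  obtain ⟨m, rfl⟩ := exists_eq_succ_of_ne_zero hm
  rw [geom_sum_succ]
  exact (hp.mul_right _).add_one

theorem padicValNat_two_geom_sum (hp : Odd p) (hm : Even m) :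
    padicValNat 2 (∑ i ∈ range m, p ^ i) = padicValNat 2 (m * (p + 1) / 2) := by
  rcases eq_or_ne m 0 with rfl | hm0
  · simp
  obtain rfl | hp1 : p = 1 ∨ 1 < p := by have := hp.pos; omega
  · simp
  have hsum : ∑ i ∈ range m, p ^ i ≠ 0 :=
    (sum_pos (fun i _ => by positivity) (nonempty_range_iff.mpr hm0)).ne'
  have hlte := padicValNat.pow_two_sub_one hp1 hp.not_two_dvd_nat hm0 hm
  rw [← geom_sum_mul_of_one_le hp1.le, padicValNat.mul hsum (by omega)] at hlte
  rw [padicValNat.div (dvd_mul_of_dvd_left hm.two_dvd _), padicValNat.mul hm0 (by omega)]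
  omega

end Nat

theorem val2_sigma_formula (n : ℕ) (hn : 0 < n) :
    padicValNat 2 (∑ d ∈ n.divisors, d)
      = ∑ p ∈ n.primeFactors.filter (fun p => Odd p ∧ Odd (n.factorization p)),
          padicValNat 2 ((n.factorization p + 1) * (p + 1) / 2) := by
  have hsum_ne_zero : ∀ p ∈ n.primeFactors, ∑ i ∈ range (n.factorization p + 1), p ^ i ≠ 0 :=
    fun p hp => (sum_pos (fun i _ => pow_pos (Nat.prime_of_mem_primeFactors hp).pos i)
      nonempty_range_add_one).ne'
  rw [Nat.sum_divisors hn.ne', padicValNat_finset_prod hsum_ne_zero,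
    ← sum_filter_of_ne (p := fun p => Odd p ∧ Odd (n.factorization p))]
  · refine sum_congr rfl fun p hp => ?_
    obtain ⟨-, hp_odd, ha_odd⟩ := mem_filter.mp hp
    exact Nat.padicValNat_two_geom_sum hp_odd ha_odd.add_one
  · intro p _ hval
    by_contra hodd
    refine hval (padicValNat.eq_zero_of_not_dvd (Odd.not_two_dvd_nat ?_))
    rcases Nat.even_or_odd p with hp_even | hp_odd
    · exact Nat.odd_geom_sum_of_even hp_even (Nat.succ_ne_zero _)
    · rw [Nat.odd_geom_sum_iff_of_odd hp_odd, Nat.odd_add_one]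
      exact fun ha_odd => hodd ⟨hp_odd, ha_odd⟩
end

section
/- Let p be an odd prime and q a prime with q ≠ p, and let n ≥ 0. Then ν_p([q^{p^n}]_{p-1}) = 1 if q ≡ 1 (mod p), and ν_p([q^{p^n}]_{p-1}) = 0 otherwise. -/
/-! By Fermat, `x = q ^ p ^ n ≡ q (mod p)`. If `q ≢ 1`, then in `ZMod p` the geometric sum is
`(x ^ p - 1) / (x - 1) = (x - 1) / (x - 1) = 1`, so `p` does not divide it. If `q ≡ 1`, the
lifting-the-exponent computation for odd `p` shows that `p` divides `1 + x + ⋯ + x ^ (p - 1)`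
exactly once. -/

open Finset

theorem ZMod.geom_sum_card_eq_one {p : ℕ} [Fact p.Prime] {a : ZMod p} (ha : a ≠ 1) :
    ∑ i ∈ range p, a ^ i = 1 := by
  rw [geom_sum_eq ha, ZMod.pow_card, div_self (sub_ne_zero.mpr ha)]

theorem padicValNat_geom_sum_prime_of_not_modEq_one {p x : ℕ} [Fact p.Prime]
    (hx : ¬x ≡ 1 [MOD p]) : padicValNat p (∑ i ∈ range p, x ^ i) = 0 := by
  have hx' : (x : ZMod p) ≠ 1 := by
    rwa [← Nat.cast_one, Ne, ZMod.natCast_eq_natCast_iff]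
  refine padicValNat.eq_zero_of_not_dvd fun h => ?_
  have h_zero := (ZMod.natCast_eq_zero_iff _ p).mpr h
  push_cast at h_zero
  rw [ZMod.geom_sum_card_eq_one hx'] at h_zero
  exact one_ne_zero h_zero

theorem padicValNat_geom_sum_prime_of_modEq_one {p x : ℕ} [hp : Fact p.Prime] (hp_odd : Odd p)
    (hx : x ≡ 1 [MOD p]) : padicValNat p (∑ i ∈ range p, x ^ i) = 1 := by
  have hdvd : (p : ℤ) ∣ x - 1 := Nat.modEq_iff_dvd.mp hx.symm
  have hndvd : ¬(p : ℤ) ∣ x := by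
    rw [Int.natCast_dvd_natCast, ← Nat.modEq_zero_iff_dvd]
    exact fun h => hp.out.not_dvd_one (Nat.modEq_zero_iff_dvd.mp (hx.symm.trans h))
  have hmult : emultiplicity p (∑ i ∈ range p, x ^ i) = 1 := by
    rw [← Int.natCast_emultiplicity]
    push_cast
    simpa using
      emultiplicity_geom_sum₂_eq_one (Nat.prime_iff_prime_int.mp hp.out) hp_odd hdvd hndvd
  have hS : ∑ i ∈ range p, x ^ i ≠ 0 := fun h => by simp [h] at hmult
  exact_mod_cast (padicValNat_eq_emultiplicity hS).trans hmult

theorem pow_prime_pow_modEq_self (p q n : ℕ) [Fact p.Prime] : q ^ p ^ n ≡ q [MOD p] := by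
  rw [← ZMod.natCast_eq_natCast_iff]
  push_cast
  exact ZMod.pow_card_pow _

theorem valp_bracket_general (p q : ℕ) (hp : Nat.Prime p) (hpodd : Odd p) (n : ℕ) :
    padicValNat p (∑ i ∈ Finset.range p, (q ^ p ^ n) ^ i)
      = if q ≡ 1 [MOD p] then 1 else 0 := by
  have : Fact p.Prime := ⟨hp⟩
  have hx := pow_prime_pow_modEq_self p q n
  split_ifs with hq
  · exact padicValNat_geom_sum_prime_of_modEq_one hpodd (hx.trans hq)
  · exact padicValNat_geom_sum_prime_of_not_modEq_one fun h => hq (hx.symm.trans h)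

theorem valp_bracket (p q : ℕ) (hp : Nat.Prime p) (hpodd : Odd p) (hq : Nat.Prime q)
    (hne : q ≠ p) (n : ℕ) :
    padicValNat p (∑ i ∈ Finset.range p, (q ^ p ^ n) ^ i)
      = if q ≡ 1 [MOD p] then 1 else 0 :=
  valp_bracket_general p q hp hpodd n
end

section
/- Let p be an odd prime and q a prime with q ≢ 1 (mod p) and q ≠ p. Let r be the multiplicative order of q modulo p. If r divides k+1, then ν_p(σ(q^k)) = ν_p(k+1) + ν_p(q^r - 1). -/
/-!
Since `σ(q^k) (q - 1) = q^(k+1) - 1` and `p ∤ q - 1`, the valuation of `σ(q^k)` is that of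
`q^(k+1) - 1 = (q^r)^m - 1`, where `k + 1 = r m`. As `p ∣ q^r - 1`, lifting the exponent gives
`ν_p(q^r - 1) + ν_p(m)`, and `ν_p(m) = ν_p(k + 1)` because `r ∣ p - 1` is prime to `p`.
-/

theorem ZMod.not_dvd_orderOf {p : ℕ} [Fact p.Prime] {a : ZMod p} (ha : a ≠ 0) :
    ¬ p ∣ orderOf a := by
  have hp := (Fact.out : p.Prime).two_le
  have hdvd : orderOf a ∣ p - 1 := ZMod.orderOf_dvd_card_sub_one ha
  have hle : orderOf a ≤ p - 1 := Nat.le_of_dvd (by omega) hdvd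
  exact Nat.not_dvd_of_pos_of_lt (Nat.pos_of_dvd_of_pos hdvd (by omega)) (by omega)

theorem ZMod.dvd_pow_orderOf_natCast_sub_one {n q : ℕ} (hq : 0 < q) :
    n ∣ q ^ orderOf (q : ZMod n) - 1 := by
  rw [← ZMod.natCast_eq_zero_iff, Nat.cast_sub (Nat.one_le_pow _ _ hq)]
  simp [pow_orderOf_eq_one]

theorem Nat.sum_divisors_prime_pow_mul_sub_one {q : ℕ} (hq : q.Prime) (k : ℕ) :
    (∑ d ∈ (q ^ k).divisors, d) * (q - 1) = q ^ (k + 1) - 1 := by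
  rw [Nat.sum_divisors_prime_pow hq]
  exact geom_sum_mul_of_one_le hq.one_le (k + 1)

theorem padicValNat_sum_divisors_prime_pow {p q : ℕ} [Fact p.Prime] (hq : q.Prime)
    (hpq : ¬ p ∣ q - 1) (k : ℕ) :
    padicValNat p (∑ d ∈ (q ^ k).divisors, d) = padicValNat p (q ^ (k + 1) - 1) := by
  have hsum : 1 ≤ ∑ d ∈ (q ^ k).divisors, d :=
    Finset.single_le_sum (f := id) (fun _ _ => Nat.zero_le _) (Nat.one_mem_divisors.2 (pow_ne_zero k hq.ne_zero))
  rw [← Nat.sum_divisors_prime_pow_mul_sub_one hq k,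
    padicValNat.mul (by omega) (Nat.sub_ne_zero_of_lt hq.one_lt),
    padicValNat.eq_zero_of_not_dvd hpq, add_zero]

theorem padicValNat_pow_sub_one {p x : ℕ} [hp : Fact p.Prime] (hpodd : Odd p) (hx : 1 < x)
    (hpx : p ∣ x - 1) {n : ℕ} (hn : n ≠ 0) :
    padicValNat p (x ^ n - 1) = padicValNat p (x - 1) + padicValNat p n := by
  have hndvd : ¬ p ∣ x := fun h =>
    hp.out.not_dvd_one (by simpa [Nat.sub_sub_self hx.le] using Nat.dvd_sub h hpx)
  simpa using padicValNat.pow_sub_pow hpodd hx hpx hndvd hn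

theorem valp_sigma_div (p q k : ℕ) (hp : Nat.Prime p) (hpodd : Odd p)
    (hq : Nat.Prime q) (hne : q ≠ p) (hcong : ¬ q ≡ 1 [MOD p])
    (hr : orderOf (q : ZMod p) ∣ (k + 1)) :
    padicValNat p (∑ d ∈ (q ^ k).divisors, d)
      = padicValNat p (k + 1) + padicValNat p (q ^ orderOf (q : ZMod p) - 1) := by
  have : Fact p.Prime := ⟨hp⟩
  have hq0 : (q : ZMod p) ≠ 0 := by
    rw [Ne, ZMod.natCast_eq_zero_iff, Nat.prime_dvd_prime_iff_eq hp hq]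
    exact hne.symm
  have hpq : ¬ p ∣ q - 1 := fun h => hcong ((Nat.modEq_iff_dvd' hq.one_le).mpr h).symm
  obtain ⟨m, hm⟩ := hr
  have hm0 : m ≠ 0 := by rintro rfl; simp at hm
  have hr0 : orderOf (q : ZMod p) ≠ 0 := by intro h; simp [h] at hm
  rw [padicValNat_sum_divisors_prime_pow hq hpq, hm, pow_mul,
    padicValNat_pow_sub_one hpodd (Nat.one_lt_pow hr0 hq.one_lt)
      (ZMod.dvd_pow_orderOf_natCast_sub_one hq.pos) hm0,
    padicValNat.mul hr0 hm0, padicValNat.eq_zero_of_not_dvd (ZMod.not_dvd_orderOf hq0),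
    zero_add, add_comm]
end
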